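/- Let R = ℂ[x₁,x₂,x₃,x₄,y₁,y₂,y₃,y₄] be the polynomial ring in eight variables over ℂ, and let I ⊆ R be the ideal generated by all 2×2 minors of the 4×2 matrix with rows (x₁,x₂), (x₃,x₄), (y₂,y₁), (y₄,y₃) together with all 2×2 minors of the 4×2 matrix with rows (x₁,x₃), (x₂,x₄), (y₃,y₁), (y₄,y₂). Then the quotient ring R/I has Krull dimension 4. -/

import Mathlib

open Matrix MvPolynomial

/-- The matrix with rows `(x₁,x₂), (x₃,x₄), (y₂,y₁), (y₄,y₃)` where `x₁,…,x₄ = X 0,…,X 3`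
and `y₁,…,y₄ = X 4,…,X 7` in `ℂ[x₁,…,x₄,y₁,…,y₄] = MvPolynomial (Fin 8) ℂ`. -/
noncomputable def P1 : Matrix (Fin 4) (Fin 2) (MvPolynomial (Fin 8) ℂ) :=
  !![X 0, X 1; X 2, X 3; X 5, X 4; X 7, X 6]

/-- The matrix with rows `(x₁,x₃), (x₂,x₄), (y₃,y₁), (y₄,y₂)`. -/
noncomputable def P2 : Matrix (Fin 4) (Fin 2) (MvPolynomial (Fin 8) ℂ) :=
  !![X 0, X 2; X 1, X 3; X 6, X 4; X 7, X 5]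

/-- The set of 2×2 minors of `P1` and `P2`: determinants of the 2×2 submatrices obtained
by choosing two of the four rows. -/
noncomputable def gens : Set (MvPolynomial (Fin 8) ℂ) :=
  {m | ∃ i j : Fin 4, i < j ∧
    (m = P1 i 0 * P1 j 1 - P1 i 1 * P1 j 0 ∨ m = P2 i 0 * P2 j 1 - P2 i 1 * P2 j 0)}





/-- Monomials of bounded exponent span: `aeval g P` lies in the span of monomials in the `g i`
with all exponents `≤ M`, provided `P.totalDegree ≤ M`. -/
theorem aeval_mem_span_monomials {F D : Type*} [Field F] [CommRing D] [Algebra F D]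
    {r : ℕ} (g : Fin r → D) (M : ℕ) (P : MvPolynomial (Fin r) F) (hP : P.totalDegree ≤ M) :
    aeval g P ∈ Submodule.span F
      (Set.range fun β : Fin r → Fin (M + 1) => ∏ i, g i ^ (β i : ℕ)) := by
  rw [P.as_sum, _root_.map_sum]
  refine Submodule.sum_mem _ fun v hv => ?_
  have hvi : ∀ i, v i ≤ M := by
    intro i
    refine le_trans ?_ (le_trans (MvPolynomial.le_totalDegree hv) hP)
    by_cases h : v i = 0
    · omega
    · exact Finset.single_le_sum (f := fun j => v j) (fun _ _ => Nat.zero_le _)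
        (Finsupp.mem_support_iff.mpr h)
  have : aeval g (monomial v (coeff v P)) = coeff v P • ∏ i, g i ^ (v i) := by
    rw [aeval_monomial, Finsupp.prod_fintype _ _ (fun i => pow_zero _), Algebra.smul_def]
  rw [this]
  refine Submodule.smul_mem _ _ (Submodule.subset_span ?_)
  refine ⟨fun i => ⟨v i, Nat.lt_succ_of_le (hvi i)⟩, rfl⟩

/-- The growth/counting bound: if `D` is a domain in which every element `w` satisfies
`δ ^ k * w = aeval g c` for some `k` and polynomial `c` in `r` fixed elements `g`, where
`δ ≠ 0` is itself a polynomial in the `g`'s, then any algebraically independent family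
in `D` over `F` has size at most `r`. -/
theorem growth_bound {F D : Type*} [Field F] [CommRing D] [IsDomain D] [Algebra F D]
    {r : ℕ} (g : Fin r → D) (δ : D) (hδ : δ ≠ 0) (cδ : MvPolynomial (Fin r) F)
    (hδg : δ = aeval g cδ)
    (hrep : ∀ w : D, ∃ (k : ℕ) (c : MvPolynomial (Fin r) F), δ ^ k * w = aeval g c)
    {m : ℕ} {y : Fin m → D} (hy : AlgebraicIndependent F y) : m ≤ r := by
  by_contra hmr
  push_neg at hmr
  -- choose representations for each y i
  choose k c hc using fun i => hrep (y i)
  classical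
  set κ : ℕ := ∑ i, k i with hκ
  set dδ : ℕ := cδ.totalDegree
  set dsum : ℕ := ∑ i, (c i).totalDegree
  set C : ℕ := dsum + κ * dδ + 1 with hC
  -- the crucial counting inequality, for every D
  have key : ∀ N : ℕ, (N + 1) ^ m ≤ (N * C + 1) ^ r := by
    intro N
    set K : ℕ := N * κ with hK
    set M : ℕ := N * C with hM
    set V := Submodule.span F
      (Set.range fun β : Fin r → Fin (M + 1) => ∏ i, g i ^ (β i : ℕ)) with hV
    -- the family
    set Φ : (Fin m → Fin (N + 1)) → D := fun α => δ ^ K * ∏ i, y i ^ (α i : ℕ) with hΦ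
    -- membership
    have hmem : ∀ α, Φ α ∈ V := by
      intro α
      have hle : ∑ i, (α i : ℕ) * k i ≤ K := by
        rw [hK, hκ, Finset.mul_sum]
        exact Finset.sum_le_sum fun i _ => Nat.mul_le_mul_right _ (Fin.is_le _)
      have hid : Φ α = aeval g ((∏ i, (c i) ^ (α i : ℕ)) * cδ ^ (K - ∑ i, (α i : ℕ) * k i)) := by
        have h1 : ∏ i, (δ ^ k i * y i) ^ (α i : ℕ)
            = δ ^ (∑ i, (α i : ℕ) * k i) * ∏ i, y i ^ (α i : ℕ) := by
          simp_rw [mul_pow, ← pow_mul]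
          rw [Finset.prod_mul_distrib, Finset.prod_pow_eq_pow_sum]
          congr 2
          exact Finset.sum_congr rfl fun i _ => mul_comm _ _
        have h2 : ∏ i, (δ ^ k i * y i) ^ (α i : ℕ) = aeval g (∏ i, (c i) ^ (α i : ℕ)) := by
          rw [_root_.map_prod]
          exact Finset.prod_congr rfl fun i _ => by rw [hc i, ← _root_.map_pow]
        have h3 : δ ^ (K - ∑ i, (α i : ℕ) * k i) = aeval g (cδ ^ (K - ∑ i, (α i : ℕ) * k i)) := by
          rw [_root_.map_pow, ← hδg]
        calc Φ α = δ ^ (K - ∑ i, (α i : ℕ) * k i) *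
              (δ ^ (∑ i, (α i : ℕ) * k i) * ∏ i, y i ^ (α i : ℕ)) := by
                have hss : K - (∑ i, (α i : ℕ) * k i) + (∑ i, (α i : ℕ) * k i) = K :=
                  Nat.sub_add_cancel hle
                rw [hΦ, ← mul_assoc, ← pow_add, hss]
          _ = aeval g ((∏ i, (c i) ^ (α i : ℕ)) * cδ ^ (K - ∑ i, (α i : ℕ) * k i)) := by
                rw [← h1, h2, h3, _root_.map_mul]
                ring
      rw [hid]
      refine aeval_mem_span_monomials g M _ ?_
      refine le_trans (MvPolynomial.totalDegree_mul _ _) ?_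
      have hb1 : (∏ i, (c i) ^ (α i : ℕ)).totalDegree ≤ N * dsum := by
        refine le_trans (MvPolynomial.totalDegree_finset_prod _ _) ?_
        rw [Finset.mul_sum]
        refine Finset.sum_le_sum fun i _ => ?_
        refine le_trans (MvPolynomial.totalDegree_pow _ _) ?_
        exact Nat.mul_le_mul (Fin.is_le _) le_rfl
      have hb2 : (cδ ^ (K - ∑ i, (α i : ℕ) * k i)).totalDegree ≤ N * (κ * dδ) := by
        refine le_trans (MvPolynomial.totalDegree_pow _ _) ?_
        have : K - ∑ i, (α i : ℕ) * k i ≤ N * κ := by omega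
        calc (K - ∑ i, (α i : ℕ) * k i) * dδ ≤ N * κ * dδ := Nat.mul_le_mul this le_rfl
          _ = N * (κ * dδ) := by ring
      calc (∏ i, (c i) ^ (α i : ℕ)).totalDegree + (cδ ^ (K - ∑ i, (α i : ℕ) * k i)).totalDegree
          ≤ N * dsum + N * (κ * dδ) := Nat.add_le_add hb1 hb2
        _ ≤ M := by rw [hM, hC]; ring_nf; omega
    -- linear independence
    have hli : LinearIndependent F Φ := by
      rw [Fintype.linearIndependent_iff]
      intro cf hsum
      have hfac : δ ^ K * ∑ α, cf α • ∏ i, y i ^ (α i : ℕ) = 0 := by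
        rw [Finset.mul_sum, ← hsum]
        refine Finset.sum_congr rfl fun α _ => ?_
        simp only [hΦ]
        exact mul_smul_comm _ _ _
      have hsum0 : ∑ α, cf α • ∏ i, y i ^ (α i : ℕ) = 0 :=
        (mul_eq_zero.mp hfac).resolve_left (pow_ne_zero _ hδ)
      set tofs : (Fin m → Fin (N + 1)) → (Fin m →₀ ℕ) :=
        fun α => Finsupp.equivFunOnFinite.symm (fun i => (α i : ℕ)) with htofs
      have htofs_inj : Function.Injective tofs := by
        intro a b hab
        funext i
        have := congrArg (fun f => f i) (congrArg Finsupp.equivFunOnFinite hab)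
        simp only [htofs, Equiv.apply_symm_apply] at this
        exact Fin.ext this
      set Q : MvPolynomial (Fin m) F := ∑ α, monomial (tofs α) (cf α) with hQ
      have haevalQ : aeval y Q = 0 := by
        rw [hQ, _root_.map_sum, ← hsum0]
        refine Finset.sum_congr rfl fun α _ => ?_
        rw [aeval_monomial, Finsupp.prod_fintype _ _ (fun i => pow_zero _), Algebra.smul_def]
        congr 1
      have hQ0 : Q = 0 := hy.eq_zero_of_aeval_eq_zero Q haevalQ
      intro α
      have : coeff (tofs α) Q = cf α := by
        rw [hQ, MvPolynomial.coeff_sum]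
        rw [Finset.sum_eq_single α]
        · rw [MvPolynomial.coeff_monomial, if_pos rfl]
        · intro β _ hβ
          rw [MvPolynomial.coeff_monomial, if_neg (fun h => hβ (htofs_inj h))]
        · intro h; exact absurd (Finset.mem_univ _) h
      rw [hQ0] at this
      simpa using this.symm
    -- conclude cardinality bound
    have : Fintype.card (Fin m → Fin (N + 1)) ≤ Module.finrank F V := by
      haveI : FiniteDimensional F V :=
        FiniteDimensional.span_of_finite F (Set.finite_range _)
      set Φ' : (Fin m → Fin (N + 1)) → V := fun α => ⟨Φ α, hmem α⟩ with hΦ'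
      have : LinearIndependent F Φ' := by
        refine LinearIndependent.of_comp V.subtype ?_
        have : (V.subtype ∘ Φ') = Φ := rfl
        rw [this]; exact hli
      exact this.fintype_card_le_finrank
    have hcard1 : Fintype.card (Fin m → Fin (N + 1)) = (N + 1) ^ m := by
      rw [Fintype.card_fun]; simp
    have hcard2 : Module.finrank F V ≤ (M + 1) ^ r := by
      refine le_trans (finrank_span_le_card _) ?_
      rw [Set.toFinset_range]
      refine le_trans Finset.card_image_le ?_
      rw [Finset.card_univ, Fintype.card_fun]
      simp
    omega
  -- arithmetic contradiction
  set E : ℕ := C + 1 with hE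
  set N : ℕ := E ^ r + 1 with hN
  have hN1 : 1 ≤ N := by omega
  have hEN : E ^ r < N := by omega
  have c1 : (N * C + 1) ^ r ≤ N ^ r * E ^ r := by
    rw [← mul_pow]
    refine Nat.pow_le_pow_left ?_ r
    nlinarith
  have hpos : 0 < N ^ r := by positivity
  have c2 : N ^ r * E ^ r < N ^ r * N := (mul_lt_mul_iff_right₀ hpos).mpr hEN
  have c3 : N ^ r * N = N ^ (r + 1) := (pow_succ N r).symm
  have c4 : N ^ (r + 1) < (N + 1) ^ (r + 1) := Nat.pow_lt_pow_left (by omega) (by omega)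
  have c5 : (N + 1) ^ (r + 1) ≤ (N + 1) ^ m := Nat.pow_le_pow_right (by omega) (by omega)
  have := key N
  omega


/-- Step lemma: given an `F`-algebra map of domains `f : D → D'`, a family `y` in `D` whose
image under `f` is algebraically independent, and a nonzero `a ∈ ker f`, the extended family
(`a` together with `y`) is algebraically independent in `D`. -/
theorem algebraicIndependent_option_of_ker {F D D' : Type*} [Field F]
    [CommRing D] [IsDomain D] [CommRing D'] [IsDomain D'] [Algebra F D] [Algebra F D']
    (f : D →ₐ[F] D') {ι : Type*} {y : ι → D} (hy : AlgebraicIndependent F (⇑f ∘ y))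
    {a : D} (ha : a ≠ 0) (hfa : f a = 0) :
    AlgebraicIndependent F (fun o : Option ι => o.elim a y) := by
  have hyD : AlgebraicIndependent F y := AlgebraicIndependent.of_comp f hy
  rw [hyD.option_iff_transcendental a]
  rintro ⟨Q, hQ0, hQa⟩
  obtain ⟨n, hn⟩ : ∃ n, n = Q.natTrailingDegree := ⟨_, rfl⟩
  have hdvd : Polynomial.X ^ n ∣ Q := by
    rw [Polynomial.X_pow_dvd_iff]
    intro d hd
    exact Polynomial.coeff_eq_zero_of_lt_natTrailingDegree (by omega)
  obtain ⟨Q', hQ'⟩ := hdvd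
  have htc : Q.coeff n = Q'.coeff 0 := by
    conv_lhs => rw [hQ']
    simpa using Polynomial.coeff_X_pow_mul Q' n 0
  have hc0 : Q'.coeff 0 ≠ 0 := by
    rw [← htc, hn]
    intro h
    have h' : Q.trailingCoeff = 0 := h
    exact hQ0 (Polynomial.trailingCoeff_eq_zero.mp h')
  have hsplit : Polynomial.aeval a Q = a ^ n * Polynomial.aeval a Q' := by
    conv_lhs => rw [hQ']
    rw [_root_.map_mul, _root_.map_pow, Polynomial.aeval_X]
  have haQ' : Polynomial.aeval a Q' = 0 := by
    have h := hsplit.symm.trans hQa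
    exact (mul_eq_zero.mp h).resolve_left (pow_ne_zero _ ha)
  have hf0 : f (Polynomial.aeval a Q') = 0 := by rw [haQ', _root_.map_zero]
  have heval : f (Polynomial.aeval a Q')
      = (f.toRingHom.comp (algebraMap (↥(Algebra.adjoin F (Set.range y))) D)) (Q'.coeff 0) := by
    have h := Polynomial.hom_eval₂ Q' (algebraMap (↥(Algebra.adjoin F (Set.range y))) D) f.toRingHom a
    have hfa0 : f.toRingHom a = 0 := hfa
    rw [hfa0, Polynomial.eval₂_at_zero] at h
    rw [Polynomial.aeval_def]
    exact h
  have h3 : (f.toRingHom.comp (algebraMap (↥(Algebra.adjoin F (Set.range y))) D)) (Q'.coeff 0) = 0 := by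
    rw [← heval]
    exact hf0
  have hfcoe : f ((Q'.coeff 0 : D)) = 0 := h3
  have hmem : (Q'.coeff 0 : D) ∈ Algebra.adjoin F (Set.range y) := (Q'.coeff 0).2
  have hmem2 : (Q'.coeff 0 : D) ∈ (aeval y : MvPolynomial ι F →ₐ[F] D).range := by
    rw [← Algebra.adjoin_range_eq_range_aeval]
    exact hmem
  obtain ⟨P, hP⟩ := hmem2
  have hPz : aeval (⇑f ∘ y) P = 0 := by
    have h1 := DFunLike.congr_fun (MvPolynomial.comp_aeval y f) P
    have h2 : f (aeval y P) = aeval (fun i => f (y i)) P := h1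
    have h2' : f (aeval y P) = aeval (⇑f ∘ y) P := h2
    rw [← h2']
    have hP' : aeval y P = (Q'.coeff 0 : D) := hP
    rw [hP', hfcoe]
  have hP0 : P = 0 := hy.eq_zero_of_aeval_eq_zero P hPz
  apply hc0
  have hval : (Q'.coeff 0 : D) = 0 := by
    have hP' : aeval y P = (Q'.coeff 0 : D) := hP
    rw [← hP', hP0, _root_.map_zero]
  exact Subtype.ext hval

/-- From a strictly increasing chain of primes `p 0 < ... < p m` in a commutative `F`-algebra,
we get an algebraically independent family of size `m` in `R ⧸ p 0`. -/
theorem chain_to_independent {F R : Type*} [Field F] [CommRing R] [Algebra F R] :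
    ∀ {m : ℕ} (p : Fin (m + 1) → Ideal R), (∀ k, (p k).IsPrime) → StrictMono p →
      ∃ y : Fin m → R ⧸ p 0, AlgebraicIndependent F y := by
  intro m
  induction m with
  | zero =>
    intro p hp _
    haveI := hp 0
    haveI : IsDomain (R ⧸ p 0) := Ideal.Quotient.isDomain (p 0)
    exact ⟨Fin.elim0, algebraicIndependent_empty_type⟩
  | succ m ih =>
    intro p hp hsm
    haveI := hp 0
    haveI := hp 1
    haveI : IsDomain (R ⧸ p 0) := Ideal.Quotient.isDomain (p 0)
    haveI : IsDomain (R ⧸ p 1) := Ideal.Quotient.isDomain (p 1)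
    obtain ⟨z, hz⟩ := ih (fun k => p k.succ) (fun k => hp k.succ)
      (fun a b hab => hsm (Fin.succ_lt_succ_iff.mpr hab))
    have h01 : p 0 ≤ p 1 := le_of_lt (hsm (by norm_num [Fin.lt_def]))
    -- the factor map
    set f : R ⧸ p 0 →ₐ[F] R ⧸ p 1 :=
      Ideal.Quotient.liftₐ (p 0) (Ideal.Quotient.mkₐ F (p 1))
        (fun a ha => by
          rw [Ideal.Quotient.mkₐ_eq_mk, Ideal.Quotient.eq_zero_iff_mem]
          exact h01 ha) with hf
    have hfmk : ∀ r : R, f (Ideal.Quotient.mk (p 0) r) = Ideal.Quotient.mk (p 1) r := by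
      intro r
      simp [hf]
      rfl
    -- z lives over p 1 ; note (fun k => p k.succ) 0 = p 1
    -- lift z through the surjection R → R ⧸ p 0
    have hzlift : ∀ i, ∃ w : R ⧸ p 0, f w = z i := by
      intro i
      obtain ⟨r, hr⟩ := Ideal.Quotient.mk_surjective (I := p 1) (z i)
      exact ⟨Ideal.Quotient.mk (p 0) r, by rw [hfmk, hr]⟩
    choose y hy using hzlift
    obtain ⟨t, htmem, htnot⟩ := SetLike.exists_of_lt (hsm (show (0 : Fin (m+2)) < 1 by
      norm_num [Fin.lt_def]))
    set a : R ⧸ p 0 := Ideal.Quotient.mk (p 0) t with hat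
    have ha : a ≠ 0 := fun h => htnot (Ideal.Quotient.eq_zero_iff_mem.mp h)
    have hfa : f a = 0 := by
      rw [hat, hfmk, Ideal.Quotient.eq_zero_iff_mem]
      exact htmem
    have hz' : AlgebraicIndependent F (⇑f ∘ y) := by
      have : ⇑f ∘ y = z := funext hy
      rw [this]
      exact hz
    have hopt := algebraicIndependent_option_of_ker f hz' ha hfa
    exact ⟨_, hopt.comp (finSuccEquiv m) (finSuccEquiv m).injective⟩


/-- If each generator `v j` of `D` has a representation `δ ^ k * v j = aeval g c`, and `δ`
itself is a polynomial in `g`, then every element of `D` has such a representation. -/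
theorem rep_all {F D : Type*} [Field F] [CommRing D] [Algebra F D]
    (v : Fin 8 → D) (hgen : Algebra.adjoin F (Set.range v) = ⊤)
    (g : Fin 4 → D) (δ : D) (cδ : MvPolynomial (Fin 4) F) (hδ : δ = aeval g cδ)
    (hv : ∀ j, ∃ (k : ℕ) (c : MvPolynomial (Fin 4) F), δ ^ k * v j = aeval g c) :
    ∀ w : D, ∃ (k : ℕ) (c : MvPolynomial (Fin 4) F), δ ^ k * w = aeval g c := by
  let W : Subalgebra F D :=
    { carrier := {w | ∃ (k : ℕ) (c : MvPolynomial (Fin 4) F), δ ^ k * w = aeval g c}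
      mul_mem' := by
        rintro x y ⟨k1, c1, e1⟩ ⟨k2, c2, e2⟩
        exact ⟨k1 + k2, c1 * c2, by rw [_root_.map_mul, ← e1, ← e2]; ring⟩
      add_mem' := by
        rintro x y ⟨k1, c1, e1⟩ ⟨k2, c2, e2⟩
        refine ⟨k1 + k2, cδ ^ k2 * c1 + cδ ^ k1 * c2, ?_⟩
        rw [_root_.map_add, _root_.map_mul, _root_.map_mul, _root_.map_pow, _root_.map_pow, ← hδ, ← e1, ← e2]
        ring
      algebraMap_mem' := by
        intro r
        exact ⟨0, C r, by rw [pow_zero, one_mul, algHom_C]⟩ }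
  intro w
  have hle : Algebra.adjoin F (Set.range v) ≤ W := by
    rw [Algebra.adjoin_le_iff]
    rintro _ ⟨j, rfl⟩
    exact hv j
  have : w ∈ W := by
    rw [hgen] at hle
    exact hle (by trivial)
  exact this

/-- Case analysis: in a domain `D` generated by `v 0, …, v 7` satisfying the ten minor
relations, there are four elements `g` and a nonzero polynomial denominator `δ` such that
every element of `D` is a polynomial in `g` divided by a power of `δ`. -/
theorem rep_of_relations {F D : Type*} [Field F] [CommRing D] [IsDomain D] [Algebra F D]
    (v : Fin 8 → D) (hgen : Algebra.adjoin F (Set.range v) = ⊤)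
    (hA : v 0 * v 3 = v 1 * v 2)
    (hB : v 5 * v 6 = v 4 * v 7)
    (h1 : v 0 * v 4 = v 1 * v 5)
    (h2 : v 0 * v 6 = v 1 * v 7)
    (h3 : v 2 * v 4 = v 3 * v 5)
    (h4 : v 2 * v 6 = v 3 * v 7)
    (h5 : v 0 * v 4 = v 2 * v 6)
    (h6 : v 0 * v 5 = v 2 * v 7)
    (h7 : v 1 * v 4 = v 3 * v 6)
    (h8 : v 1 * v 5 = v 3 * v 7) :
    ∃ (g : Fin 4 → D) (δ : D) (cδ : MvPolynomial (Fin 4) F), δ ≠ 0 ∧ δ = aeval g cδ ∧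
      ∀ w : D, ∃ (k : ℕ) (c : MvPolynomial (Fin 4) F), δ ^ k * w = aeval g c := by
  by_cases hv0 : v 0 ≠ 0
  · refine ⟨![v 0, v 1, v 2, v 7], v 0, X 0, hv0, by simp, ?_⟩
    refine rep_all v hgen ![v 0, v 1, v 2, v 7] (v 0) (X 0 : MvPolynomial (Fin 4) F) (by simp) ?_
    intro j
    fin_cases j
    · exact ⟨0, X 0, by simp⟩
    · exact ⟨0, X 1, by simp⟩
    · exact ⟨0, X 2, by simp⟩
    · exact ⟨1, X 1 * X 2, by simp; linear_combination hA⟩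
    · exact ⟨2, X 1 * X 2 * X 3, by simp; linear_combination (v 0) * h1 + (v 1) * h6⟩
    · exact ⟨1, X 2 * X 3, by simp; linear_combination h6⟩
    · exact ⟨1, X 1 * X 3, by simp; linear_combination h2⟩
    · exact ⟨0, X 3, by simp⟩
  push_neg at hv0
  by_cases hv1 : v 1 ≠ 0
  · refine ⟨![v 0, v 1, v 3, v 6], v 1, X 1, hv1, by simp, ?_⟩
    refine rep_all v hgen ![v 0, v 1, v 3, v 6] (v 1) (X 1 : MvPolynomial (Fin 4) F) (by simp) ?_
    intro j
    fin_cases j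
    · exact ⟨0, X 0, by simp⟩
    · exact ⟨0, X 1, by simp⟩
    · exact ⟨1, X 0 * X 2, by simp; linear_combination -hA⟩
    · exact ⟨0, X 2, by simp⟩
    · exact ⟨1, X 2 * X 3, by simp; linear_combination h7⟩
    · exact ⟨2, X 0 * X 2 * X 3, by simp; linear_combination (-(v 1)) * h1 + (v 0) * h7⟩
    · exact ⟨0, X 3, by simp⟩
    · exact ⟨1, X 0 * X 3, by simp; linear_combination -h2⟩
  push_neg at hv1
  by_cases hv2 : v 2 ≠ 0
  · refine ⟨![v 0, v 2, v 3, v 5], v 2, X 1, hv2, by simp, ?_⟩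
    refine rep_all v hgen ![v 0, v 2, v 3, v 5] (v 2) (X 1 : MvPolynomial (Fin 4) F) (by simp) ?_
    intro j
    fin_cases j
    · exact ⟨0, X 0, by simp⟩
    · exact ⟨1, X 0 * X 2, by simp; linear_combination -hA⟩
    · exact ⟨0, X 1, by simp⟩
    · exact ⟨0, X 2, by simp⟩
    · exact ⟨1, X 2 * X 3, by simp; linear_combination h3⟩
    · exact ⟨0, X 3, by simp⟩
    · exact ⟨2, X 0 * X 2 * X 3, by simp; linear_combination (-(v 2)) * h5 + (v 0) * h3⟩
    · exact ⟨1, X 0 * X 3, by simp; linear_combination -h6⟩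
  push_neg at hv2
  by_cases hv3 : v 3 ≠ 0
  · refine ⟨![v 1, v 2, v 3, v 4], v 3, X 2, hv3, by simp, ?_⟩
    refine rep_all v hgen ![v 1, v 2, v 3, v 4] (v 3) (X 2 : MvPolynomial (Fin 4) F) (by simp) ?_
    intro j
    fin_cases j
    · exact ⟨1, X 0 * X 1, by simp; linear_combination hA⟩
    · exact ⟨0, X 0, by simp⟩
    · exact ⟨0, X 1, by simp⟩
    · exact ⟨0, X 2, by simp⟩
    · exact ⟨0, X 3, by simp⟩
    · exact ⟨1, X 1 * X 3, by simp; linear_combination -h3⟩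
    · exact ⟨1, X 0 * X 3, by simp; linear_combination -h7⟩
    · exact ⟨2, X 0 * X 1 * X 3, by simp; linear_combination (-(v 3)) * h4 + (-(v 2)) * h7⟩
  push_neg at hv3
  by_cases hv4 : v 4 ≠ 0
  · refine ⟨![v 4, v 5, v 6, v 4], v 4, X 0, hv4, by simp, ?_⟩
    refine rep_all v hgen ![v 4, v 5, v 6, v 4] (v 4) (X 0 : MvPolynomial (Fin 4) F) (by simp) ?_
    intro j
    fin_cases j
    · exact ⟨0, 0, by simp [hv0]⟩
    · exact ⟨0, 0, by simp [hv1]⟩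
    · exact ⟨0, 0, by simp [hv2]⟩
    · exact ⟨0, 0, by simp [hv3]⟩
    · exact ⟨0, X 0, by simp⟩
    · exact ⟨0, X 1, by simp⟩
    · exact ⟨0, X 2, by simp⟩
    · exact ⟨1, X 1 * X 2, by simp; linear_combination -hB⟩
  push_neg at hv4
  by_cases hv7 : v 7 ≠ 0
  · refine ⟨![v 5, v 6, v 7, v 7], v 7, X 2, hv7, by simp, ?_⟩
    refine rep_all v hgen ![v 5, v 6, v 7, v 7] (v 7) (X 2 : MvPolynomial (Fin 4) F) (by simp) ?_
    intro j
    fin_cases j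
    · exact ⟨0, 0, by simp [hv0]⟩
    · exact ⟨0, 0, by simp [hv1]⟩
    · exact ⟨0, 0, by simp [hv2]⟩
    · exact ⟨0, 0, by simp [hv3]⟩
    · exact ⟨1, X 0 * X 1, by simp; linear_combination -hB⟩
    · exact ⟨0, X 0, by simp⟩
    · exact ⟨0, X 1, by simp⟩
    · exact ⟨0, X 2, by simp⟩
  push_neg at hv7
  have h56 : v 5 = 0 ∨ v 6 = 0 := by
    have : v 5 * v 6 = 0 := by rw [hB, hv4, zero_mul]
    exact mul_eq_zero.mp this
  rcases h56 with hv5 | hv6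
  · refine ⟨![v 6, v 6, v 6, v 6], 1, 1, one_ne_zero, by simp, ?_⟩
    refine rep_all v hgen ![v 6, v 6, v 6, v 6] (1) (1 : MvPolynomial (Fin 4) F) (by simp) ?_
    intro j
    fin_cases j
    · exact ⟨0, 0, by simp [hv0]⟩
    · exact ⟨0, 0, by simp [hv1]⟩
    · exact ⟨0, 0, by simp [hv2]⟩
    · exact ⟨0, 0, by simp [hv3]⟩
    · exact ⟨0, 0, by simp [hv4]⟩
    · exact ⟨0, 0, by simp [hv5]⟩
    · exact ⟨0, X 0, by simp⟩
    · exact ⟨0, 0, by simp [hv7]⟩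
  · refine ⟨![v 5, v 5, v 5, v 5], 1, 1, one_ne_zero, by simp, ?_⟩
    refine rep_all v hgen ![v 5, v 5, v 5, v 5] (1) (1 : MvPolynomial (Fin 4) F) (by simp) ?_
    intro j
    fin_cases j
    · exact ⟨0, 0, by simp [hv0]⟩
    · exact ⟨0, 0, by simp [hv1]⟩
    · exact ⟨0, 0, by simp [hv2]⟩
    · exact ⟨0, 0, by simp [hv3]⟩
    · exact ⟨0, 0, by simp [hv4]⟩
    · exact ⟨0, X 0, by simp⟩
    · exact ⟨0, 0, by simp [hv6]⟩
    · exact ⟨0, 0, by simp [hv7]⟩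

noncomputable abbrev Rpoly := MvPolynomial (Fin 8) ℂ
noncomputable abbrev Igen : Ideal Rpoly := Ideal.span gens

theorem gens_mem₁ : (X 0 * X 3 - X 1 * X 2 : Rpoly) ∈ gens :=
  ⟨0, 1, by decide, Or.inl (by simp [P1])⟩
theorem gens_memB : (X 5 * X 6 - X 4 * X 7 : Rpoly) ∈ gens :=
  ⟨2, 3, by decide, Or.inl (by simp [P1])⟩
theorem gens_mem1 : (X 0 * X 4 - X 1 * X 5 : Rpoly) ∈ gens :=
  ⟨0, 2, by decide, Or.inl (by simp [P1])⟩
theorem gens_mem2 : (X 0 * X 6 - X 1 * X 7 : Rpoly) ∈ gens :=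
  ⟨0, 3, by decide, Or.inl (by simp [P1])⟩
theorem gens_mem3 : (X 2 * X 4 - X 3 * X 5 : Rpoly) ∈ gens :=
  ⟨1, 2, by decide, Or.inl (by simp [P1])⟩
theorem gens_mem4 : (X 2 * X 6 - X 3 * X 7 : Rpoly) ∈ gens :=
  ⟨1, 3, by decide, Or.inl (by simp [P1])⟩
theorem gens_mem5 : (X 0 * X 4 - X 2 * X 6 : Rpoly) ∈ gens :=
  ⟨0, 2, by decide, Or.inr (by simp [P2])⟩
theorem gens_mem6 : (X 0 * X 5 - X 2 * X 7 : Rpoly) ∈ gens :=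
  ⟨0, 3, by decide, Or.inr (by simp [P2])⟩
theorem gens_mem7 : (X 1 * X 4 - X 3 * X 6 : Rpoly) ∈ gens :=
  ⟨1, 2, by decide, Or.inr (by simp [P2])⟩
theorem gens_mem8 : (X 1 * X 5 - X 3 * X 7 : Rpoly) ∈ gens :=
  ⟨1, 3, by decide, Or.inr (by simp [P2])⟩

theorem upper_bound : ringKrullDim (Rpoly ⧸ Igen) ≤ 4 := by
  rw [ringKrullDim, Order.krullDim]
  refine iSup_le fun p => ?_
  suffices h : p.length ≤ 4 by exact_mod_cast h
  set m := p.length with hm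
  -- the pulled back chain of primes in Rpoly
  set q : Fin (m + 1) → Ideal Rpoly :=
    fun k => Ideal.comap (Ideal.Quotient.mk Igen) (p.toFun k).asIdeal with hq
  have hprime : ∀ k, (q k).IsPrime := fun k => by
    have := (p.toFun k).isPrime
    exact Ideal.IsPrime.comap _
  have hsm : StrictMono q := by
    intro a b hab
    have h1 : (p.toFun a).asIdeal < (p.toFun b).asIdeal := p.strictMono hab
    refine lt_of_le_of_ne (Ideal.comap_mono h1.le) (fun h => h1.ne ?_)
    have h2 := congrArg (Ideal.map (Ideal.Quotient.mk Igen)) h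
    rwa [Ideal.map_comap_of_surjective _ Ideal.Quotient.mk_surjective,
      Ideal.map_comap_of_surjective _ Ideal.Quotient.mk_surjective] at h2
  have hIq : Igen ≤ q 0 := by
    rw [hq]
    intro x hx
    simp only [Ideal.mem_comap]
    have : Ideal.Quotient.mk Igen x = 0 := Ideal.Quotient.eq_zero_iff_mem.mpr hx
    rw [this]
    exact Submodule.zero_mem _
  obtain ⟨y, hy⟩ := chain_to_independent (F := ℂ) q hprime hsm
  haveI := hprime 0
  haveI : IsDomain (Rpoly ⧸ q 0) := Ideal.Quotient.isDomain (q 0)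
  -- generators of the quotient
  set v : Fin 8 → Rpoly ⧸ q 0 := fun j => Ideal.Quotient.mk (q 0) (X j) with hv
  have hgen : Algebra.adjoin ℂ (Set.range v) = ⊤ := by
    have h1 := AlgHom.map_adjoin (Ideal.Quotient.mkₐ ℂ (q 0))
      (Set.range (MvPolynomial.X : Fin 8 → Rpoly))
    rw [MvPolynomial.adjoin_range_X, ← Set.range_comp] at h1
    have h2 : Subalgebra.map (Ideal.Quotient.mkₐ ℂ (q 0)) ⊤ = ⊤ := by
      rw [Algebra.map_top]
      rw [AlgHom.range_eq_top]
      exact Ideal.Quotient.mkₐ_surjective ℂ (q 0)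
    rw [h2] at h1
    have h3 : (⇑(Ideal.Quotient.mkₐ ℂ (q 0)) ∘ (MvPolynomial.X : Fin 8 → Rpoly)) = v := by
      funext j
      simp [hv]
    rw [h3] at h1
    exact h1.symm
  -- the ten relations
  have hrel : ∀ a b c d : Fin 8, (X a * X b - X c * X d : Rpoly) ∈ gens →
      v a * v b = v c * v d := by
    intro a b c d hmem
    have h0 : Ideal.Quotient.mk (q 0) (X a * X b - X c * X d : Rpoly) = 0 :=
      Ideal.Quotient.eq_zero_iff_mem.mpr (hIq (Ideal.subset_span hmem))
    rw [_root_.map_sub, _root_.map_mul, _root_.map_mul, sub_eq_zero] at h0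
    exact h0
  obtain ⟨g, δ, cδ, hδ0, hδc, hrep⟩ :=
    rep_of_relations (F := ℂ) v hgen
      (hrel 0 3 1 2 gens_mem₁) (hrel 5 6 4 7 gens_memB)
      (hrel 0 4 1 5 gens_mem1) (hrel 0 6 1 7 gens_mem2)
      (hrel 2 4 3 5 gens_mem3) (hrel 2 6 3 7 gens_mem4)
      (hrel 0 4 2 6 gens_mem5) (hrel 0 5 2 7 gens_mem6)
      (hrel 1 4 3 6 gens_mem7) (hrel 1 5 3 7 gens_mem8)
  exact growth_bound g δ hδ0 cδ hδc hrep hy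
noncomputable abbrev Tpoly := MvPolynomial (Fin 5) ℂ

noncomputable def vv0 : Fin 8 → Tpoly := ![X 0 * X 2, X 0 * X 3, X 1 * X 2, X 1 * X 3, X 4 * (X 1 * X 3), X 4 * (X 1 * X 2), X 4 * (X 0 * X 3), X 4 * (X 0 * X 2)]

noncomputable def vv1 : Fin 8 → Tpoly := ![X 0 * X 2, X 0 * X 3, X 1 * X 2, X 1 * X 3, 0, 0, 0, 0]

noncomputable def vv2 : Fin 8 → Tpoly := ![X 0 * X 2, X 0 * X 3, 0, 0, 0, 0, 0, 0]

noncomputable def vv3 : Fin 8 → Tpoly := ![X 0 * X 2, 0, 0, 0, 0, 0, 0, 0]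

noncomputable def vv4 : Fin 8 → Tpoly := ![0, 0, 0, 0, 0, 0, 0, 0]

noncomputable def ss0 : Fin 5 → Tpoly := ![X 0, X 1, X 2, X 3, 0]

noncomputable def ss1 : Fin 5 → Tpoly := ![X 0, 0, X 2, X 3, X 4]

noncomputable def ss2 : Fin 5 → Tpoly := ![X 0, X 1, X 2, 0, X 4]

noncomputable def ss3 : Fin 5 → Tpoly := ![0, 0, 0, 0, 0]

@[simp] theorem vv0_0 : vv0 0 = X 0 * X 2 := rfl
@[simp] theorem vv0_1 : vv0 1 = X 0 * X 3 := rfl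
@[simp] theorem vv0_2 : vv0 2 = X 1 * X 2 := rfl
@[simp] theorem vv0_3 : vv0 3 = X 1 * X 3 := rfl
@[simp] theorem vv0_4 : vv0 4 = X 4 * (X 1 * X 3) := rfl
@[simp] theorem vv0_5 : vv0 5 = X 4 * (X 1 * X 2) := rfl
@[simp] theorem vv0_6 : vv0 6 = X 4 * (X 0 * X 3) := rfl
@[simp] theorem vv0_7 : vv0 7 = X 4 * (X 0 * X 2) := rfl
@[simp] theorem vv1_0 : vv1 0 = X 0 * X 2 := rfl
@[simp] theorem vv1_1 : vv1 1 = X 0 * X 3 := rfl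
@[simp] theorem vv1_2 : vv1 2 = X 1 * X 2 := rfl
@[simp] theorem vv1_3 : vv1 3 = X 1 * X 3 := rfl
@[simp] theorem vv1_4 : vv1 4 = 0 := rfl
@[simp] theorem vv1_5 : vv1 5 = 0 := rfl
@[simp] theorem vv1_6 : vv1 6 = 0 := rfl
@[simp] theorem vv1_7 : vv1 7 = 0 := rfl
@[simp] theorem vv2_0 : vv2 0 = X 0 * X 2 := rfl
@[simp] theorem vv2_1 : vv2 1 = X 0 * X 3 := rfl
@[simp] theorem vv2_2 : vv2 2 = 0 := rfl
@[simp] theorem vv2_3 : vv2 3 = 0 := rfl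
@[simp] theorem vv2_4 : vv2 4 = 0 := rfl
@[simp] theorem vv2_5 : vv2 5 = 0 := rfl
@[simp] theorem vv2_6 : vv2 6 = 0 := rfl
@[simp] theorem vv2_7 : vv2 7 = 0 := rfl
@[simp] theorem vv3_0 : vv3 0 = X 0 * X 2 := rfl
@[simp] theorem vv3_1 : vv3 1 = 0 := rfl
@[simp] theorem vv3_2 : vv3 2 = 0 := rfl
@[simp] theorem vv3_3 : vv3 3 = 0 := rfl
@[simp] theorem vv3_4 : vv3 4 = 0 := rfl
@[simp] theorem vv3_5 : vv3 5 = 0 := rfl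
@[simp] theorem vv3_6 : vv3 6 = 0 := rfl
@[simp] theorem vv3_7 : vv3 7 = 0 := rfl
@[simp] theorem vv4_0 : vv4 0 = 0 := rfl
@[simp] theorem vv4_1 : vv4 1 = 0 := rfl
@[simp] theorem vv4_2 : vv4 2 = 0 := rfl
@[simp] theorem vv4_3 : vv4 3 = 0 := rfl
@[simp] theorem vv4_4 : vv4 4 = 0 := rfl
@[simp] theorem vv4_5 : vv4 5 = 0 := rfl
@[simp] theorem vv4_6 : vv4 6 = 0 := rfl
@[simp] theorem vv4_7 : vv4 7 = 0 := rfl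
@[simp] theorem ss0_0 : ss0 0 = X 0 := rfl
@[simp] theorem ss0_1 : ss0 1 = X 1 := rfl
@[simp] theorem ss0_2 : ss0 2 = X 2 := rfl
@[simp] theorem ss0_3 : ss0 3 = X 3 := rfl
@[simp] theorem ss0_4 : ss0 4 = 0 := rfl
@[simp] theorem ss1_0 : ss1 0 = X 0 := rfl
@[simp] theorem ss1_1 : ss1 1 = 0 := rfl
@[simp] theorem ss1_2 : ss1 2 = X 2 := rfl
@[simp] theorem ss1_3 : ss1 3 = X 3 := rfl
@[simp] theorem ss1_4 : ss1 4 = X 4 := rfl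
@[simp] theorem ss2_0 : ss2 0 = X 0 := rfl
@[simp] theorem ss2_1 : ss2 1 = X 1 := rfl
@[simp] theorem ss2_2 : ss2 2 = X 2 := rfl
@[simp] theorem ss2_3 : ss2 3 = 0 := rfl
@[simp] theorem ss2_4 : ss2 4 = X 4 := rfl
@[simp] theorem ss3_0 : ss3 0 = 0 := rfl
@[simp] theorem ss3_1 : ss3 1 = 0 := rfl
@[simp] theorem ss3_2 : ss3 2 = 0 := rfl
@[simp] theorem ss3_3 : ss3 3 = 0 := rfl
@[simp] theorem ss3_4 : ss3 4 = 0 := rfl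

noncomputable def ψ0 : Rpoly →ₐ[ℂ] Tpoly := aeval vv0
noncomputable def ψ1 : Rpoly →ₐ[ℂ] Tpoly := aeval vv1
noncomputable def ψ2 : Rpoly →ₐ[ℂ] Tpoly := aeval vv2
noncomputable def ψ3 : Rpoly →ₐ[ℂ] Tpoly := aeval vv3
noncomputable def ψ4 : Rpoly →ₐ[ℂ] Tpoly := aeval vv4

theorem comp01 : (aeval ss0 : Tpoly →ₐ[ℂ] Tpoly).comp ψ0 = ψ1 := by
  rw [ψ0, ψ1, MvPolynomial.comp_aeval]
  congr 1
  funext j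
  fin_cases j <;> simp

theorem comp12 : (aeval ss1 : Tpoly →ₐ[ℂ] Tpoly).comp ψ1 = ψ2 := by
  rw [ψ1, ψ2, MvPolynomial.comp_aeval]
  congr 1
  funext j
  fin_cases j <;> simp

theorem comp23 : (aeval ss2 : Tpoly →ₐ[ℂ] Tpoly).comp ψ2 = ψ3 := by
  rw [ψ2, ψ3, MvPolynomial.comp_aeval]
  congr 1
  funext j
  fin_cases j <;> simp

theorem comp34 : (aeval ss3 : Tpoly →ₐ[ℂ] Tpoly).comp ψ3 = ψ4 := by
  rw [ψ3, ψ4, MvPolynomial.comp_aeval]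
  congr 1
  funext j
  fin_cases j <;> simp

noncomputable def Pl0 : Ideal Rpoly := RingHom.ker (ψ0).toRingHom
noncomputable def Pl1 : Ideal Rpoly := RingHom.ker (ψ1).toRingHom
noncomputable def Pl2 : Ideal Rpoly := RingHom.ker (ψ2).toRingHom
noncomputable def Pl3 : Ideal Rpoly := RingHom.ker (ψ3).toRingHom
noncomputable def Pl4 : Ideal Rpoly := RingHom.ker (ψ4).toRingHom
instance : (Pl0).IsPrime := RingHom.ker_isPrime _
instance : (Pl1).IsPrime := RingHom.ker_isPrime _
instance : (Pl2).IsPrime := RingHom.ker_isPrime _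
instance : (Pl3).IsPrime := RingHom.ker_isPrime _
instance : (Pl4).IsPrime := RingHom.ker_isPrime _

theorem Pl_mono01 : Pl0 ≤ Pl1 := by
  intro x hx
  have hx0 : ψ0 x = 0 := hx
  refine RingHom.mem_ker.mpr ?_
  show ψ1 x = 0
  rw [← comp01]
  show (aeval ss0 : Tpoly →ₐ[ℂ] Tpoly) (ψ0 x) = 0
  rw [hx0, _root_.map_zero]

theorem Pl_mono12 : Pl1 ≤ Pl2 := by
  intro x hx
  have hx0 : ψ1 x = 0 := hx
  refine RingHom.mem_ker.mpr ?_
  show ψ2 x = 0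
  rw [← comp12]
  show (aeval ss1 : Tpoly →ₐ[ℂ] Tpoly) (ψ1 x) = 0
  rw [hx0, _root_.map_zero]

theorem Pl_mono23 : Pl2 ≤ Pl3 := by
  intro x hx
  have hx0 : ψ2 x = 0 := hx
  refine RingHom.mem_ker.mpr ?_
  show ψ3 x = 0
  rw [← comp23]
  show (aeval ss2 : Tpoly →ₐ[ℂ] Tpoly) (ψ2 x) = 0
  rw [hx0, _root_.map_zero]

theorem Pl_mono34 : Pl3 ≤ Pl4 := by
  intro x hx
  have hx0 : ψ3 x = 0 := hx
  refine RingHom.mem_ker.mpr ?_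
  show ψ4 x = 0
  rw [← comp34]
  show (aeval ss3 : Tpoly →ₐ[ℂ] Tpoly) (ψ3 x) = 0
  rw [hx0, _root_.map_zero]

theorem Pl_strict01 : Pl0 < Pl1 := by
  refine lt_of_le_of_ne Pl_mono01 (fun heq => ?_)
  have h1 : (X 7 : Rpoly) ∈ Pl1 := RingHom.mem_ker.mpr (by show ψ1 _ = 0; simp [ψ1])
  rw [← heq] at h1
  have h2 : ψ0 (X 7 : Rpoly) = 0 := h1
  rw [show ψ0 (X 7 : Rpoly) = vv0 7 from by simp [ψ0]] at h2
  have h3 := congrArg (eval (fun _ => (1:ℂ))) h2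
  simp at h3

theorem Pl_strict12 : Pl1 < Pl2 := by
  refine lt_of_le_of_ne Pl_mono12 (fun heq => ?_)
  have h1 : (X 2 : Rpoly) ∈ Pl2 := RingHom.mem_ker.mpr (by show ψ2 _ = 0; simp [ψ2])
  rw [← heq] at h1
  have h2 : ψ1 (X 2 : Rpoly) = 0 := h1
  rw [show ψ1 (X 2 : Rpoly) = vv1 2 from by simp [ψ1]] at h2
  have h3 := congrArg (eval (fun _ => (1:ℂ))) h2
  simp at h3

theorem Pl_strict23 : Pl2 < Pl3 := by
  refine lt_of_le_of_ne Pl_mono23 (fun heq => ?_)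
  have h1 : (X 1 : Rpoly) ∈ Pl3 := RingHom.mem_ker.mpr (by show ψ3 _ = 0; simp [ψ3])
  rw [← heq] at h1
  have h2 : ψ2 (X 1 : Rpoly) = 0 := h1
  rw [show ψ2 (X 1 : Rpoly) = vv2 1 from by simp [ψ2]] at h2
  have h3 := congrArg (eval (fun _ => (1:ℂ))) h2
  simp at h3

theorem Pl_strict34 : Pl3 < Pl4 := by
  refine lt_of_le_of_ne Pl_mono34 (fun heq => ?_)
  have h1 : (X 0 : Rpoly) ∈ Pl4 := RingHom.mem_ker.mpr (by show ψ4 _ = 0; simp [ψ4])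
  rw [← heq] at h1
  have h2 : ψ3 (X 0 : Rpoly) = 0 := h1
  rw [show ψ3 (X 0 : Rpoly) = vv3 0 from by simp [ψ3]] at h2
  have h3 := congrArg (eval (fun _ => (1:ℂ))) h2
  simp at h3

theorem Igen_le_Pl0 : Igen ≤ Pl0 := by
  rw [Igen, Ideal.span_le]
  rintro x ⟨i, j, hij, rfl | rfl⟩ <;> fin_cases i <;> fin_cases j <;>
    first
      | exact absurd hij (by decide)
      | (refine RingHom.mem_ker.mpr ?_
         show ψ0 _ = 0
         simp [ψ0, P1, P2] <;> ring)

theorem map_strict {P Q : Ideal Rpoly} (hPQ : P < Q) (hP : Igen ≤ P) (hQ : Igen ≤ Q) :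
    Ideal.map (Ideal.Quotient.mk Igen) P < Ideal.map (Ideal.Quotient.mk Igen) Q := by
  refine lt_of_le_of_ne (Ideal.map_mono hPQ.le) (fun h => hPQ.ne ?_)
  have h1 := congrArg (Ideal.comap (Ideal.Quotient.mk Igen)) h
  rwa [Ideal.comap_map_of_surjective _ Ideal.Quotient.mk_surjective,
    Ideal.comap_map_of_surjective _ Ideal.Quotient.mk_surjective,
    ← RingHom.ker_eq_comap_bot, Ideal.mk_ker, sup_eq_left.mpr hP, sup_eq_left.mpr hQ] at h1

theorem Igen_le_Pl1 : Igen ≤ Pl1 := le_trans Igen_le_Pl0 Pl_mono01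
theorem Igen_le_Pl2 : Igen ≤ Pl2 := le_trans Igen_le_Pl1 Pl_mono12
theorem Igen_le_Pl3 : Igen ≤ Pl3 := le_trans Igen_le_Pl2 Pl_mono23
theorem Igen_le_Pl4 : Igen ≤ Pl4 := le_trans Igen_le_Pl3 Pl_mono34

noncomputable def Qmap (P : Ideal Rpoly) : Ideal (Rpoly ⧸ Igen) :=
  Ideal.map (Ideal.Quotient.mk Igen) P

theorem Qmap_prime {P : Ideal Rpoly} [P.IsPrime] (hP : Igen ≤ P) : (Qmap P).IsPrime :=
  Ideal.map_isPrime_of_surjective Ideal.Quotient.mk_surjective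
    (by rw [Ideal.mk_ker]; exact hP)

noncomputable def chainPts : Fin 5 → PrimeSpectrum (Rpoly ⧸ Igen) :=
  ![⟨Qmap Pl0, Qmap_prime Igen_le_Pl0⟩,
    ⟨Qmap Pl1, Qmap_prime Igen_le_Pl1⟩,
    ⟨Qmap Pl2, Qmap_prime Igen_le_Pl2⟩,
    ⟨Qmap Pl3, Qmap_prime Igen_le_Pl3⟩,
    ⟨Qmap Pl4, Qmap_prime Igen_le_Pl4⟩]

theorem lower_bound : (4 : WithBot ℕ∞) ≤ ringKrullDim (Rpoly ⧸ Igen) := by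
  have hstep : ∀ i : Fin 4, chainPts i.castSucc < chainPts i.succ := by
    intro i
    fin_cases i
    · exact map_strict Pl_strict01 Igen_le_Pl0 Igen_le_Pl1
    · exact map_strict Pl_strict12 Igen_le_Pl1 Igen_le_Pl2
    · exact map_strict Pl_strict23 Igen_le_Pl2 Igen_le_Pl3
    · exact map_strict Pl_strict34 Igen_le_Pl3 Igen_le_Pl4
  let ch : LTSeries (PrimeSpectrum (Rpoly ⧸ Igen)) := ⟨4, chainPts, hstep⟩
  have h := Order.LTSeries.length_le_krullDim ch
  have hlen : ch.length = 4 := rfl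
  rw [hlen] at h
  exact_mod_cast h


theorem stmt12 :
    ringKrullDim (MvPolynomial (Fin 8) ℂ ⧸ Ideal.span gens) = 4 :=
  le_antisymm upper_bound lower_bound
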